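/- Weak bisimilarity ≈ is a congruence with respect to the hiding operator in the timed setting: if P ≈ Q then P/L ≈ Q/L. -/

import Mathlib

namespace DTCalc

inductive Act where
  | tau : Act
  | vis : ℕ → Act
  | delta : Act
deriving DecidableEq

/-- `γ` is (the visible action of) a member of `S`. -/
def Act.inSet (γ : Act) (S : Set ℕ) : Prop :=
  ∃ a, γ = Act.vis a ∧ a ∈ S

inductive Expr where
  | nil : Expr
  | one : Expr                      -- the terminated process 𝟙
  | var : ℕ → Expr
  | pre : Act → Expr → Expr         -- basic prefix γ.E
  | tpre : Act → Expr → Expr        -- timed prefix γᵗ.E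
  | sum : Expr → Expr → Expr        -- basic choice E + F
  | tcho : Expr → Expr → Expr       -- timed choice E +ᵗ F
  | recur : ℕ → Expr → Expr         -- rec X.E
  | pri : Expr → Expr               -- priority scope
  | vis : Expr → Expr               -- auxiliary vis(E)
  | hide : Set ℕ → Expr → Expr      -- hiding E / L
  | par : Set ℕ → Expr → Expr → Expr      -- CSP parallel E ∥_S F
  | lmerge : Set ℕ → Expr → Expr → Expr   -- left merge
  | smerge : Set ℕ → Expr → Expr → Expr   -- synchronization merge

def subst : Expr → ℕ → Expr → Expr
  | .nil, _, _ => .nil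
  | .one, _, _ => .one
  | .var m, x, F => if m = x then F else .var m
  | .pre γ E, x, F => .pre γ (subst E x F)
  | .tpre γ E, x, F => .tpre γ (subst E x F)
  | .sum E G, x, F => .sum (subst E x F) (subst G x F)
  | .tcho E G, x, F => .tcho (subst E x F) (subst G x F)
  | .recur y E, x, F => if y = x then .recur y E else .recur y (subst E x F)
  | .pri E, x, F => .pri (subst E x F)
  | .vis E, x, F => .vis (subst E x F)
  | .hide L E, x, F => .hide L (subst E x F)
  | .par S E G, x, F => .par S (subst E x F) (subst G x F)
  | .lmerge S E G, x, F => .lmerge S (subst E x F) (subst G x F)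
  | .smerge S E G, x, F => .smerge S (subst E x F) (subst G x F)

def free : Expr → ℕ → Prop
  | .nil, _ => False
  | .one, _ => False
  | .var m, x => m = x
  | .pre _ E, x => free E x
  | .tpre _ E, x => free E x
  | .sum E G, x => free E x ∨ free G x
  | .tcho E G, x => free E x ∨ free G x
  | .recur y E, x => x ≠ y ∧ free E x
  | .pri E, x => free E x
  | .vis E, x => free E x
  | .hide _ E, x => free E x
  | .par _ E G, x => free E x ∨ free G x
  | .lmerge _ E G, x => free E x ∨ free G x
  | .smerge _ E G, x => free E x ∨ free G x

def Closed (E : Expr) : Prop := ∀ x, ¬ free E x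

/-- Standard (non-δ) transitions; these never depend on δ-transitions. -/
inductive StepStd : Expr → Act → Expr → Prop where
  | pre {α : Act} (h : α ≠ Act.delta) (E : Expr) : StepStd (.pre α E) α E
  | tpre {α : Act} (h : α ≠ Act.delta) (E : Expr) : StepStd (.tpre α E) α E
  | sumL {P α P'} (Q : Expr) : StepStd P α P' → StepStd (.sum P Q) α P'
  | sumR {Q α Q'} (P : Expr) : StepStd Q α Q' → StepStd (.sum P Q) α Q'
  | tchoL {P α P'} (Q : Expr) : StepStd P α P' → StepStd (.tcho P Q) α P'
  | tchoR {Q α Q'} (P : Expr) : StepStd Q α Q' → StepStd (.tcho P Q) α Q'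
  | unf {x E γ P'} : StepStd (subst E x (.recur x E)) γ P' → StepStd (.recur x E) γ P'
  | pri {P α P'} : StepStd P α P' → StepStd (.pri P) α P'
  | parL {S P α P'} (Q : Expr) (h : ¬ Act.inSet α S) :
      StepStd P α P' → StepStd (.par S P Q) α (.par S P' Q)
  | parR {S Q α Q'} (P : Expr) (h : ¬ Act.inSet α S) :
      StepStd Q α Q' → StepStd (.par S P Q) α (.par S P Q')
  | parS {S P Q a P' Q'} (h : a ∈ S) :
      StepStd P (.vis a) P' → StepStd Q (.vis a) Q' →
      StepStd (.par S P Q) (.vis a) (.par S P' Q')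
  | hideIn {L P a P'} (h : a ∈ L) :
      StepStd P (.vis a) P' → StepStd (.hide L P) Act.tau (.hide L P')
  | hideOut {L P α P'} (h : ¬ Act.inSet α L) :
      StepStd P α P' → StepStd (.hide L P) α (.hide L P')
  | visA {P a P'} : StepStd P (.vis a) P' → StepStd (.vis P) (.vis a) P'
  | visT {P P'' a P'} : StepStd P Act.tau P'' → StepStd (.vis P'') (.vis a) P' →
      StepStd (.vis P) (.vis a) P'
  | lm {S P α P'} (Q : Expr) (h : ¬ Act.inSet α S) :
      StepStd P α P' → StepStd (.lmerge S P Q) α (.par S P' Q)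
  | sm {S P Q a P' Q'} (h : a ∈ S) :
      StepStd (.vis P) (.vis a) P' → StepStd (.vis Q) (.vis a) Q' →
      StepStd (.smerge S P Q) (.vis a) (.par S P' Q')

def CanTau (P : Expr) : Prop := ∃ P', StepStd P Act.tau P'

/-- δ ("tick") transitions (stratified: negative premises refer to standard
transitions only). -/
inductive StepDel : Expr → Expr → Prop where
  | one : StepDel .one .one
  | pre (E : Expr) : StepDel (.pre Act.delta E) E
  | tpreD (E : Expr) : StepDel (.tpre Act.delta E) E
  | tpreV (a : ℕ) (E : Expr) : StepDel (.tpre (Act.vis a) E) (.tpre (Act.vis a) E)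
  | sumL {P P'} (Q : Expr) : StepDel P P' → ¬ CanTau Q → StepDel (.sum P Q) P'
  | sumR {Q Q'} (P : Expr) : StepDel Q Q' → ¬ CanTau P → StepDel (.sum P Q) Q'
  | tcho {P P' Q Q'} : StepDel P P' → StepDel Q Q' → StepDel (.tcho P Q) (.tcho P' Q')
  | par {S : Set ℕ} {P P' Q Q'} : StepDel P P' → StepDel Q Q' →
      StepDel (.par S P Q) (.par S P' Q')
  | hide {L : Set ℕ} {P P'} (h : ∀ a ∈ L, ¬ ∃ P'', StepStd P (Act.vis a) P'') :
      StepDel P P' → StepDel (.hide L P) (.hide L P')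
  | unf {x E P'} : StepDel (subst E x (.recur x E)) P' → StepDel (.recur x E) P'
  | sm {S : Set ℕ} {P P' Q Q'} : StepDel P P' → StepDel Q Q' →
      StepDel (.smerge S P Q) (.par S P' Q')

/-- The full transition relation. -/
def Step (P : Expr) (γ : Act) (Q : Expr) : Prop :=
  if γ = Act.delta then StepDel P Q else StepStd P γ Q

def TauStar : Expr → Expr → Prop :=
  Relation.ReflTransGen (fun P Q => Step P Act.tau Q)

def Weak (P : Expr) (γ : Act) (Q : Expr) : Prop :=
  ∃ P₁ P₂, TauStar P P₁ ∧ Step P₁ γ P₂ ∧ TauStar P₂ Q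

def WeakHat (P : Expr) (γ : Act) (Q : Expr) : Prop :=
  if γ = Act.tau then TauStar P Q else Weak P γ Q

def IsWeakBisim (β : Expr → Expr → Prop) : Prop :=
  ∀ P Q, β P Q →
    (∀ γ P', Step P γ P' → ∃ Q', WeakHat Q γ Q' ∧ β P' Q') ∧
    (∀ γ Q', Step Q γ Q' → ∃ P', WeakHat P γ P' ∧ β P' Q')

/-- Weak bisimilarity `≈`. -/
def WBisim (P Q : Expr) : Prop := ∃ β, IsWeakBisim β ∧ β P Q

/-- Rooted time weak bisimulations. -/
def IsRTWB (β : Expr → Expr → Prop) : Prop :=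
  ∀ P Q, β P Q →
    (∀ α P', α ≠ Act.delta → Step P α P' → ∃ Q', Weak Q α Q' ∧ WBisim P' Q') ∧
    (∀ P', Step P Act.delta P' → ∃ Q', Step Q Act.delta Q' ∧ β P' Q') ∧
    (∀ α Q', α ≠ Act.delta → Step Q α Q' → ∃ P', Weak P α P' ∧ WBisim P' Q') ∧
    (∀ Q', Step Q Act.delta Q' → ∃ P', Step P Act.delta P' ∧ β P' Q')

/-- Time observational congruence `≃_T`. -/
def TObsCong (P Q : Expr) : Prop := ∃ β, IsRTWB β ∧ β P Q

def Reach : Expr → Expr → Prop :=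
  Relation.ReflTransGen (fun P Q => ∃ γ, Step P γ Q)

/-- Every reachable state has at most one outgoing δ transition. -/
def TimeDet (P : Expr) : Prop :=
  ∀ Q, Reach P Q → ∀ Q₁ Q₂, Step Q Act.delta Q₁ → Step Q Act.delta Q₂ → Q₁ = Q₂

/-- Terms of the basic calculus extended with the static operators ∥_S and /L. -/
def InStatic : Expr → Prop
  | .nil => True
  | .var _ => True
  | .pre _ E => InStatic E
  | .sum E F => InStatic E ∧ InStatic F
  | .recur _ E => InStatic E
  | .par _ E F => InStatic E ∧ InStatic F
  | .hide _ E => InStatic E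
  | _ => False

/-- Terms of the (specification level) discrete time calculus. -/
def InDT : Expr → Prop
  | .nil => True
  | .one => True
  | .var _ => True
  | .tpre _ E => InDT E
  | .tcho E F => InDT E ∧ InDT F
  | .par _ E F => InDT E ∧ InDT F
  | .hide _ E => InDT E
  | .recur _ E => InDT E
  | _ => False

/-- Terms of the basic calculus. -/
def Basic : Expr → Prop
  | .nil => True
  | .var _ => True
  | .pre _ E => Basic E
  | .sum E F => Basic E ∧ Basic F
  | .recur _ E => Basic E
  | _ => False

/-- Some free occurrence of `x` is fully unguarded (not under any prefix). -/
def FUVar : Expr → ℕ → Prop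
  | .var m, x => m = x
  | .sum E F, x => FUVar E x ∨ FUVar F x
  | .tcho E F, x => FUVar E x ∨ FUVar F x
  | .par _ E F, x => FUVar E x ∨ FUVar F x
  | .lmerge _ E F, x => FUVar E x ∨ FUVar F x
  | .smerge _ E F, x => FUVar E x ∨ FUVar F x
  | .hide _ E, x => FUVar E x
  | .pri E, x => FUVar E x
  | .vis E, x => FUVar E x
  | .recur y E, x => y ≠ x ∧ FUVar E x
  | _, _ => False

/-- Every free occurrence of `x` in `E` is (strongly) guarded. -/
def GVar : Expr → ℕ → Prop
  | .nil, _ => True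
  | .one, _ => True
  | .var m, x => m ≠ x
  | .pre γ E, x => γ = Act.tau → GVar E x
  | .tpre γ E, x => γ = Act.tau → GVar E x
  | .sum E F, x => GVar E x ∧ GVar F x
  | .tcho E F, x => GVar E x ∧ GVar F x
  | .recur y E, x => y ≠ x → GVar E x
  | .pri E, x => GVar E x
  | .vis E, x => GVar E x
  | .hide _ E, x => GVar E x
  | .par _ E F, x => GVar E x ∧ GVar F x
  | .lmerge _ E F, x => GVar E x ∧ GVar F x
  | .smerge _ E F, x => GVar E x ∧ GVar F x

def Guarded : Expr → Prop
  | .nil => True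
  | .one => True
  | .var _ => True
  | .pre _ E => Guarded E
  | .tpre _ E => Guarded E
  | .sum E F => Guarded E ∧ Guarded F
  | .tcho E F => Guarded E ∧ Guarded F
  | .recur y E => GVar E y ∧ Guarded E
  | .pri E => Guarded E
  | .vis E => Guarded E
  | .hide _ E => Guarded E
  | .par _ E F => Guarded E ∧ Guarded F
  | .lmerge _ E F => Guarded E ∧ Guarded F
  | .smerge _ E F => Guarded E ∧ Guarded F

/-- `x` is serial in `E` : every subexpression containing `x` free, apart from
`x` itself, is of the form γ.F, F + G or rec Y.F. -/
def SerialVar : Expr → ℕ → Prop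
  | .nil, _ => True
  | .one, _ => True
  | .var _, _ => True
  | .pre _ E, x => SerialVar E x
  | .sum E F, x => SerialVar E x ∧ SerialVar F x
  | .recur y E, x => y = x ∨ SerialVar E x
  | .pri E, x => ¬ free E x
  | .vis E, x => ¬ free E x
  | .tpre _ E, x => ¬ free E x
  | .hide _ E, x => ¬ free E x
  | .tcho E F, x => ¬ free E x ∧ ¬ free F x
  | .par _ E F, x => ¬ free E x ∧ ¬ free F x
  | .lmerge _ E F, x => ¬ free E x ∧ ¬ free F x
  | .smerge _ E F, x => ¬ free E x ∧ ¬ free F x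

/-- Simultaneous substitution of closed terms for free variables. -/
def msubst : Expr → (ℕ → Expr) → Expr
  | .nil, _ => .nil
  | .one, _ => .one
  | .var m, σ => σ m
  | .pre γ E, σ => .pre γ (msubst E σ)
  | .tpre γ E, σ => .tpre γ (msubst E σ)
  | .sum E F, σ => .sum (msubst E σ) (msubst F σ)
  | .tcho E F, σ => .tcho (msubst E σ) (msubst F σ)
  | .recur y E, σ => .recur y (msubst E (Function.update σ y (.var y)))
  | .pri E, σ => .pri (msubst E σ)
  | .vis E, σ => .vis (msubst E σ)
  | .hide L E, σ => .hide L (msubst E σ)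
  | .par S E F, σ => .par S (msubst E σ) (msubst F σ)
  | .lmerge S E F, σ => .lmerge S (msubst E σ) (msubst F σ)
  | .smerge S E F, σ => .smerge S (msubst E σ) (msubst F σ)

/-- Time observational congruence on open terms (via closed substitutions). -/
def TObsCongO (E F : Expr) : Prop :=
  ∀ σ : ℕ → Expr, (∀ n, Closed (σ n)) → TObsCong (msubst E σ) (msubst F σ)

/-- The axiom system 𝒜_DT. -/
inductive ProvDT : Expr → Expr → Prop where
  | refl (E) : ProvDT E E
  | symm {E F} : ProvDT E F → ProvDT F E
  | trans {E F G} : ProvDT E F → ProvDT F G → ProvDT E G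
  | congPre (γ) {E F} : ProvDT E F → ProvDT (.pre γ E) (.pre γ F)
  | congTPre (γ) {E F} : ProvDT E F → ProvDT (.tpre γ E) (.tpre γ F)
  | congSum {E E' F F'} : ProvDT E E' → ProvDT F F' → ProvDT (.sum E F) (.sum E' F')
  | congTCho {E E' F F'} : ProvDT E E' → ProvDT F F' → ProvDT (.tcho E F) (.tcho E' F')
  | congRec (x) {E F} : ProvDT E F → ProvDT (.recur x E) (.recur x F)
  | congPri {E F} : ProvDT E F → ProvDT (.pri E) (.pri F)
  | congVis {E F} : ProvDT E F → ProvDT (.vis E) (.vis F)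
  | congHide (L) {E F} : ProvDT E F → ProvDT (.hide L E) (.hide L F)
  | congPar (S) {E E' F F'} : ProvDT E E' → ProvDT F F' → ProvDT (.par S E F) (.par S E' F')
  | congLM (S) {E E' F F'} : ProvDT E E' → ProvDT F F' → ProvDT (.lmerge S E F) (.lmerge S E' F')
  | congSM (S) {E E' F F'} : ProvDT E E' → ProvDT F F' → ProvDT (.smerge S E F) (.smerge S E' F')
  | a1 (E F) : ProvDT (.sum E F) (.sum F E)
  | a2 (E F G) : ProvDT (.sum (.sum E F) G) (.sum E (.sum F G))
  | a3 (E) : ProvDT (.sum E E) E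
  | a4 (E) : ProvDT (.sum E .nil) E
  | tau1' {α} (h : α ≠ Act.delta) (E) : ProvDT (.pre α (.pre Act.tau E)) (.pre α E)
  | tau2 (E) : ProvDT (.sum E (.pre Act.tau E)) (.pre Act.tau E)
  | tau3' {α} (h : α ≠ Act.delta) (E F) :
      ProvDT (.sum (.pre α (.sum E (.pre Act.tau F))) (.pre α F))
             (.pre α (.sum E (.pre Act.tau F)))
  | tau4 {α} (h : α ≠ Act.delta) {x F} (hs : SerialVar F x) (E) :
      ProvDT (.pre α (subst F x (.pre Act.delta (.pre Act.tau E))))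
             (.pre α (subst F x (.pre Act.delta E)))
  | pri1 : ProvDT (.pri .nil) .nil
  | pri2 {α} (h : α ≠ Act.delta) (E) : ProvDT (.pri (.pre α E)) (.pre α E)
  | pri3 (E) : ProvDT (.pri (.pre Act.delta E)) .nil
  | pri4 (E F) : ProvDT (.pri (.sum E F)) (.sum (.pri E) (.pri F))
  | pri5 (E) : ProvDT (.pri (.pri E)) (.pri E)
  | pri6 (E F) : ProvDT (.sum (.pre Act.tau E) F) (.sum (.pre Act.tau E) (.pri F))
  | rec1 (x E) : ProvDT (.recur x E) (subst E x (.recur x E))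
  | rec2 {x E F} (hs : SerialVar E x) (hg : GVar E x) :
      ProvDT F (subst E x F) → ProvDT F (.recur x E)
  | ung1 (x E) : ProvDT (.recur x (.sum (.var x) E)) (.recur x E)
  | ung2 (x E) :
      ProvDT (.recur x (.sum (.pre Act.tau (.var x)) E)) (.recur x (.pre Act.tau (.pri E)))
  | ung3 (x E F) :
      ProvDT (.recur x (.sum (.pre Act.tau (.sum (.var x) E)) F))
             (.recur x (.sum (.sum (.pre Act.tau (.var x)) E) F))
  | ung4 (x E F) :
      ProvDT (.recur x (.sum (.pre Act.tau (.sum (.pri (.var x)) E)) F))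
             (.recur x (.sum (.sum (.pre Act.tau (.var x)) E) F))
  | ter (x : ℕ) : ProvDT .one (.recur x (.pre Act.delta (.var x)))
  | tpre1 {α} (h : α ≠ Act.delta) {x E} (hx : ¬ free E x) :
      ProvDT (.tpre α E) (.recur x (.sum (.pre Act.delta (.var x)) (.pre α E)))
  | tpre2 (E) : ProvDT (.tpre Act.delta E) (.pre Act.delta E)
  | tch1 (E F) : ProvDT (.tcho E F) (.tcho F E)
  | tch2 (E F G) : ProvDT (.tcho (.tcho E F) G) (.tcho E (.tcho F G))
  | tch3 (E) : ProvDT (.tcho E .one) E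
  | tch4 (E F) : ProvDT (.pri (.tcho E F)) (.sum (.pri E) (.pri F))
  | tch5 (E F) : ProvDT (.tcho (.pri E) F) (.sum (.pri E) (.pri F))
  | tch6 (E F) : ProvDT (.tcho (.pre Act.delta E) (.pre Act.delta F)) (.pre Act.delta (.tcho E F))
  | tch7 (E F G) : ProvDT (.tcho (.sum E F) G) (.sum (.tcho E G) (.tcho F G))
  | hi1 (L) : ProvDT (.hide L .nil) .nil
  | hi2 {γ} {L : Set ℕ} (h : ¬ Act.inSet γ L) (E) :
      ProvDT (.hide L (.pre γ E)) (.pre γ (.hide L E))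
  | hi3 {a : ℕ} {L : Set ℕ} (h : a ∈ L) (E) :
      ProvDT (.hide L (.pre (Act.vis a) E)) (.pre Act.tau (.hide L E))
  | hi4 (L E F) : ProvDT (.hide L (.sum E F)) (.sum (.hide L E) (.hide L F))
  | recHi {x E} (hs : SerialVar E x) (L) :
      ProvDT (.hide L (.recur x E)) (.recur x (.hide L E))
  | vis1 : ProvDT (.vis .nil) .nil
  | vis2 (a E) : ProvDT (.vis (.pre (Act.vis a) E)) (.pre (Act.vis a) E)
  | vis3 (E F) : ProvDT (.vis (.sum E F)) (.sum (.vis E) (.vis F))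
  | parAx (S E F) :
      ProvDT (.par S E F) (.sum (.sum (.lmerge S E F) (.lmerge S F E)) (.smerge S E F))
  | lm1 (S E) : ProvDT (.lmerge S .nil E) .nil
  | lm2 {γ} {S : Set ℕ} (h : Act.inSet γ S ∨ γ = Act.delta) (E F) :
      ProvDT (.lmerge S (.pre γ E) F) .nil
  | lm3 {α} {S : Set ℕ} (h1 : α ≠ Act.delta) (h2 : ¬ Act.inSet α S) (E F) :
      ProvDT (.lmerge S (.pre α E) F) (.pre α (.par S E F))
  | lm4 (S E F G) :
      ProvDT (.lmerge S (.sum E F) G) (.sum (.lmerge S E G) (.lmerge S F G))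
  | sm1 (S E F) : ProvDT (.smerge S E F) (.smerge S F E)
  | sm2 (S E) : ProvDT (.smerge S .nil E) .nil
  | sm3 {γ γ'} {S : Set ℕ} (h : ¬ (Act.inSet γ S ∨ γ = Act.delta) ∨ γ ≠ γ')
      (h1 : γ ≠ Act.tau) (h2 : γ' ≠ Act.tau) (E F) :
      ProvDT (.smerge S (.pre γ E) (.pre γ' F)) .nil
  | sm4 (S E F) : ProvDT (.smerge S (.pre Act.tau E) F) (.pri (.smerge S E F))
  | sm5 {γ} {S : Set ℕ} (h : Act.inSet γ S ∨ γ = Act.delta) (E F) :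
      ProvDT (.smerge S (.pre γ E) (.pre γ F)) (.pre γ (.par S E F))
  | sm6 (S E F G) :
      ProvDT (.smerge S (.sum (.pri E) (.pri F)) G)
             (.sum (.smerge S (.pri E) G) (.smerge S (.pri F) G))
  | sm7 (S E F G) :
      ProvDT (.smerge S (.sum (.pre Act.delta E) (.vis F)) G)
             (.sum (.smerge S (.pre Act.delta E) G) (.smerge S (.vis F) G))

/-- Standard equation sets. -/
structure StdEqSet (n : ℕ) where
  pres : Fin n → List (Act × Fin n)
  frees : Fin n → List ℕ
  frees_ge : ∀ i, ∀ w ∈ frees i, n ≤ w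

def instBody {n : ℕ} (S : StdEqSet n) (Es : Fin n → Expr) (i : Fin n) : Expr :=
  (S.pres i).foldr (fun p acc => Expr.sum (Expr.pre p.1 (Es p.2)) acc)
    ((S.frees i).foldr (fun w acc => Expr.sum (Expr.var w) acc) Expr.nil)

def ProvSatDT {n : ℕ} (hn : 0 < n) (E : Expr) (S : StdEqSet n) : Prop :=
  ∃ Es : Fin n → Expr, Es ⟨0, hn⟩ = E ∧
    (∀ i x, free (Es i) x → n ≤ x) ∧
    (∀ i, ProvDT (Es i) (instBody S Es i))

def Prioritized {n : ℕ} (S : StdEqSet n) : Prop :=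
  ∀ i, (∃ j, (Act.tau, j) ∈ S.pres i) → ∀ j, (Act.delta, j) ∉ S.pres i

def EqGuarded {n : ℕ} (S : StdEqSet n) : Prop :=
  ∀ i : Fin n, ¬ Relation.TransGen (fun i j : Fin n => (Act.tau, j) ∈ S.pres i) i i

/-- Each equation has at most one δ summand. -/
def TimeDetSet {n : ℕ} (S : StdEqSet n) : Prop :=
  ∀ i, ((S.pres i).filter (fun p => decide (p.1 = Act.delta))).length ≤ 1

def ClosedSet {n : ℕ} (S : StdEqSet n) : Prop := ∀ i, S.frees i = []

/-! Hiding relabels the moves of `P` without creating new ones, so a weak bisimulation for `P ≈ Q`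
transfers move by move to `P/L` and `Q/L`; a hidden move of `P` is matched by a weak move of `Q`
with the same label, which becomes a sequence of τ-moves of `Q/L`. The only delicate case is a
δ-move of `P/L`: `Q` answers with `Q ⇒ Q₁ -δ-> Q₂ ⇒ Q'`, and `Q₁/L` may tick only if `Q₁` has no
move in `L`. By maximal progress `P` has no τ-move, so `P ≈ Q₁`, and any `a`-move of `Q₁` with
`a ∈ L` would be answered by an `a`-move of `P` itself, which the side condition of `P/L -δ->`
excludes. -/

lemma StepStd.ne_delta {P Q : Expr} {γ : Act} (h : StepStd P γ Q) : γ ≠ Act.delta := by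
  induction h <;> first | assumption | simp

lemma step_iff_stepStd {P Q : Expr} {γ : Act} (h : γ ≠ Act.delta) :
    Step P γ Q ↔ StepStd P γ Q := by simp [Step, h]

lemma StepStd.step {P Q : Expr} {γ : Act} (h : StepStd P γ Q) : Step P γ Q :=
  (step_iff_stepStd h.ne_delta).mpr h

lemma step_delta_iff {P Q : Expr} : Step P Act.delta Q ↔ StepDel P Q := by simp [Step]

lemma weakHat_tau_iff {P Q : Expr} : WeakHat P Act.tau Q ↔ TauStar P Q := by simp [WeakHat]

lemma weakHat_iff_weak {P Q : Expr} {γ : Act} (h : γ ≠ Act.tau) :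
    WeakHat P γ Q ↔ Weak P γ Q := by simp [WeakHat, h]

lemma Act.not_inSet_tau (L : Set ℕ) : ¬ Act.tau.inSet L := by
  rintro ⟨a, h, -⟩; cases h

lemma StepDel.not_canTau {P P' : Expr} (hd : StepDel P P') : ¬ CanTau P := by
  rintro ⟨R, hR⟩
  induction hd generalizing R with
  | sumL _ _ hQ ih => cases hR with
    | sumL _ h => exact ih _ h
    | sumR _ h => exact hQ ⟨_, h⟩
  | sumR _ _ hP ih => cases hR with
    | sumL _ h => exact hP ⟨_, h⟩
    | sumR _ h => exact ih _ h
  | tcho _ _ ihP ihQ => cases hR with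
    | tchoL _ h => exact ihP _ h
    | tchoR _ h => exact ihQ _ h
  | par _ _ ihP ihQ => cases hR with
    | parL _ _ h => exact ihP _ h
    | parR _ _ h => exact ihQ _ h
  | hide hno _ ih => cases hR with
    | hideIn ha h => exact hno _ ha ⟨_, h⟩
    | hideOut _ h => exact ih _ h
  | unf _ ih => cases hR with
    | unf h => exact ih _ h
  | _ => cases hR

lemma TauStar.eq_of_not_canTau {P Q : Expr} (hP : ¬ CanTau P) (hs : TauStar P Q) : Q = P := by
  rcases hs.cases_head with rfl | ⟨R, hR, -⟩
  · rfl
  · exact absurd ⟨R, (step_iff_stepStd (by simp)).mp hR⟩ hP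

lemma TauStar.hide (L : Set ℕ) {P Q : Expr} (hs : TauStar P Q) :
    TauStar (.hide L P) (.hide L Q) := by
  induction hs with
  | refl => exact .refl
  | tail _ hR ih =>
    exact ih.tail (StepStd.hideOut (Act.not_inSet_tau L) ((step_iff_stepStd (by simp)).mp hR)).step

lemma WeakHat.hide {L : Set ℕ} {P Q : Expr} {γ : Act} (hγ : ¬ γ.inSet L) (hδ : γ ≠ Act.delta)
    (hw : WeakHat P γ Q) : WeakHat (.hide L P) γ (.hide L Q) := by
  by_cases hτ : γ = Act.tau
  · subst hτ
    exact weakHat_tau_iff.mpr ((weakHat_tau_iff.mp hw).hide L)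
  · obtain ⟨P₁, P₂, hs₁, hs, hs₂⟩ := (weakHat_iff_weak hτ).mp hw
    exact (weakHat_iff_weak hτ).mpr ⟨_, _, hs₁.hide L,
      (StepStd.hideOut hγ ((step_iff_stepStd hδ).mp hs)).step, hs₂.hide L⟩

lemma WeakHat.hide_tauStar {L : Set ℕ} {P Q : Expr} {a : ℕ} (ha : a ∈ L)
    (hw : WeakHat P (.vis a) Q) : TauStar (.hide L P) (.hide L Q) := by
  obtain ⟨P₁, P₂, hs₁, hs, hs₂⟩ := (weakHat_iff_weak (by simp)).mp hw
  exact ((hs₁.hide L).tail (StepStd.hideIn ha ((step_iff_stepStd (by simp)).mp hs)).step).trans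
    (hs₂.hide L)

lemma WBisim.symm {P Q : Expr} (h : WBisim P Q) : WBisim Q P := by
  obtain ⟨β, hβ, hPQ⟩ := h
  exact ⟨fun X Y => β Y X, fun X Y hXY => (hβ Y X hXY).symm, hPQ⟩

lemma WBisim.simulate {P Q P' : Expr} {γ : Act} (h : WBisim P Q) (hs : Step P γ P') :
    ∃ Q', WeakHat Q γ Q' ∧ WBisim P' Q' := by
  obtain ⟨β, hβ, hPQ⟩ := h
  obtain ⟨Q', hw, hb⟩ := (hβ P Q hPQ).1 γ P' hs
  exact ⟨Q', hw, β, hβ, hb⟩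

lemma WBisim.tauStar_right {P Q Q₁ : Expr} (hP : ¬ CanTau P) (h : WBisim P Q)
    (hs : TauStar Q Q₁) : WBisim P Q₁ := by
  induction hs with
  | refl => exact h
  | tail _ hR ih =>
    obtain ⟨P', hw, hb⟩ := ih.symm.simulate hR
    rw [(weakHat_tau_iff.mp hw).eq_of_not_canTau hP] at hb
    exact hb.symm

lemma WBisim.exists_stepStd_vis {P Q Q' : Expr} {a : ℕ} (hP : ¬ CanTau P) (h : WBisim P Q)
    (hs : StepStd Q (.vis a) Q') : ∃ P', StepStd P (.vis a) P' := by
  obtain ⟨P', hw, -⟩ := h.symm.simulate hs.step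
  obtain ⟨P₁, P₂, hs₁, hs', -⟩ := (weakHat_iff_weak (by simp)).mp hw
  rw [hs₁.eq_of_not_canTau hP] at hs'
  exact ⟨P₂, (step_iff_stepStd (by simp)).mp hs'⟩

lemma WBisim.hide_simulate_delta {L : Set ℕ} {P Q P' : Expr} (h : WBisim P Q)
    (hL : ∀ a ∈ L, ¬ ∃ P'', StepStd P (.vis a) P'') (hd : StepDel P P') :
    ∃ Q', Weak (.hide L Q) .delta (.hide L Q') ∧ WBisim P' Q' := by
  obtain ⟨Q', hw, hb⟩ := h.simulate (step_delta_iff.mpr hd)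
  obtain ⟨Q₁, Q₂, hs₁, hs, hs₂⟩ := (weakHat_iff_weak (by simp)).mp hw
  have hPQ₁ : WBisim P Q₁ := h.tauStar_right hd.not_canTau hs₁
  have hL₁ : ∀ a ∈ L, ¬ ∃ R, StepStd Q₁ (.vis a) R := fun a ha ⟨_, hR⟩ =>
    hL a ha (hPQ₁.exists_stepStd_vis hd.not_canTau hR)
  exact ⟨Q', ⟨_, _, hs₁.hide L, step_delta_iff.mpr (.hide hL₁ (step_delta_iff.mp hs)),
    hs₂.hide L⟩, hb⟩

lemma WBisim.hide_simulate {L : Set ℕ} {P Q X : Expr} {γ : Act} (h : WBisim P Q)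
    (hs : Step (.hide L P) γ X) :
    ∃ P' Q', X = .hide L P' ∧ WeakHat (.hide L Q) γ (.hide L Q') ∧ WBisim P' Q' := by
  by_cases hδ : γ = Act.delta
  · subst hδ
    cases step_delta_iff.mp hs with
    | hide hL hd =>
      obtain ⟨Q', hw, hb⟩ := h.hide_simulate_delta hL hd
      exact ⟨_, Q', rfl, (weakHat_iff_weak (by simp)).mpr hw, hb⟩
  · cases (step_iff_stepStd hδ).mp hs with
    | hideIn ha hs' =>
      obtain ⟨Q', hw, hb⟩ := h.simulate hs'.step
      exact ⟨_, Q', rfl, weakHat_tau_iff.mpr (hw.hide_tauStar ha), hb⟩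
    | hideOut hγ hs' =>
      obtain ⟨Q', hw, hb⟩ := h.simulate hs'.step
      exact ⟨_, Q', rfl, hw.hide hγ hδ, hb⟩

lemma isWeakBisim_hide (L : Set ℕ) :
    IsWeakBisim (fun X Y => ∃ P Q, WBisim P Q ∧ X = .hide L P ∧ Y = .hide L Q) := by
  rintro _ _ ⟨P, Q, h, rfl, rfl⟩
  refine ⟨fun γ X hs => ?_, fun γ Y hs => ?_⟩
  · obtain ⟨P', Q', rfl, hw, hb⟩ := h.hide_simulate hs
    exact ⟨_, hw, P', Q', hb, rfl, rfl⟩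
  · obtain ⟨Q', P', rfl, hw, hb⟩ := h.symm.hide_simulate hs
    exact ⟨_, hw, P', Q', hb.symm, rfl, rfl⟩

theorem wbisim_hide_congruence_general (L : Set ℕ) (P Q : Expr)
    (h : WBisim P Q) :
    WBisim (.hide L P) (.hide L Q) :=
  ⟨_, isWeakBisim_hide L, P, Q, h, rfl, rfl⟩

/-- ≈ is a congruence w.r.t. hiding. -/
theorem wbisim_hide_congruence (L : Set ℕ) (P Q : Expr)
    (hP : Closed P) (hQ : Closed Q)
    (hsP : InStatic P) (hsQ : InStatic Q)
    (h : WBisim P Q) :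
    WBisim (.hide L P) (.hide L Q) :=
  wbisim_hide_congruence_general L P Q h

end DTCalc
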